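/- The reflections in the roots γ₀ and γ₁ are expressed in terms of the fundamental reflections of W̃(D₅^{(1)}): w_{γ₀} = w₃ ∘ w₀ ∘ w₂ ∘ w₁ ∘ w₂ ∘ w₀ ∘ w₃ and w_{γ₁} = w₂ ∘ w₅ ∘ w₃ ∘ w₄ ∘ w₃ ∘ w₅ ∘ w₂ as maps L → L. -/

import Mathlib

open scoped BigOperators

/-- The Picard lattice of the blown-up surface: free ℤ-module with basis
`H₀,H₁,E₁,…,E₈`, realized as coordinates `0,1,2,…,9` of `Fin 10 → ℤ`. -/
abbrev L : Type := Fin 10 → ℤ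

def H0 : L := Pi.single 0 1
def H1 : L := Pi.single 1 1
def E1 : L := Pi.single 2 1
def E2 : L := Pi.single 3 1
def E3 : L := Pi.single 4 1
def E4 : L := Pi.single 5 1
def E5 : L := Pi.single 6 1
def E6 : L := Pi.single 7 1
def E7 : L := Pi.single 8 1
def E8 : L := Pi.single 9 1

/-- The intersection form: `⟨H₀,H₁⟩ = 1`, `⟨H_i,H_i⟩ = 0`, `⟨E_k,E_l⟩ = -δ_{kl}`,
`⟨H_i,E_k⟩ = 0`. -/
def ip (x y : L) : ℤ :=
  x 0 * y 1 + x 1 * y 0 - x 2 * y 2 - x 3 * y 3 - x 4 * y 4 - x 5 * y 5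
    - x 6 * y 6 - x 7 * y 7 - x 8 * y 8 - x 9 * y 9

lemma ip_add_left (x y v : L) : ip (x + y) v = ip x v + ip y v := by
  simp only [ip, Pi.add_apply]; ring

lemma ip_smul_left (c : ℤ) (x v : L) : ip (c • x) v = c * ip x v := by
  simp only [ip, Pi.smul_apply, smul_eq_mul]; ring

/-- The reflection `x ↦ x + ⟨x,v⟩ v` associated to a vector `v` with `⟨v,v⟩ = -2`. -/
def reflV (v : L) : L →ₗ[ℤ] L where
  toFun x := x + ip x v • v
  map_add' x y := by
    show x + y + ip (x + y) v • v = (x + ip x v • v) + (y + ip y v • v)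
    rw [ip_add_left, add_smul]; abel
  map_smul' c x := by
    show c • x + ip (c • x) v • v = c • (x + ip x v • v)
    rw [ip_smul_left, mul_smul, smul_add]

-- simple roots
def al0 : L := E5 - E6
def al1 : L := E1 - E2
def al2 : L := H1 - E1 - E5
def al3 : L := H0 - E3 - E7
def al4 : L := E3 - E4
def al5 : L := E7 - E8

/-- The root lattice `Q = ℤα₀ + ⋯ + ℤα₅`. -/
def Q : Submodule ℤ L := Submodule.span ℤ {al0, al1, al2, al3, al4, al5}

-- the simple reflections w_i
def w0 : L →ₗ[ℤ] L := reflV al0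
def w1 : L →ₗ[ℤ] L := reflV al1
def w2 : L →ₗ[ℤ] L := reflV al2
def w3 : L →ₗ[ℤ] L := reflV al3
def w4 : L →ₗ[ℤ] L := reflV al4
def w5 : L →ₗ[ℤ] L := reflV al5

/-- `σ₁₀`: exchanges `E₁↔E₅`, `E₂↔E₆`. -/
def sig10 : L →ₗ[ℤ] L := LinearMap.funLeft ℤ ℤ ![0, 1, 6, 7, 4, 5, 2, 3, 8, 9]

/-- `σ₅₄₃₂₁₀`: exchanges `H₀↔H₁`, `E₁↔E₃`, `E₂↔E₄`, `E₅↔E₇`, `E₆↔E₈`. -/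
def sig543210 : L →ₗ[ℤ] L := LinearMap.funLeft ℤ ℤ ![1, 0, 4, 5, 2, 3, 8, 9, 6, 7]

/-- `σ₅₄ = σ₅₄₃₂₁₀ ∘ σ₁₀ ∘ σ₅₄₃₂₁₀`: exchanges `E₃↔E₇`, `E₄↔E₈`. -/
def sig54 : L →ₗ[ℤ] L := sig543210 ∘ₗ sig10 ∘ₗ sig543210

-- components of the anticanonical divisor
def D0 : L := H0 - E1 - E2
def D1 : L := H1 - E3 - E4
def D2 : L := H0 - E5 - E6
def D3 : L := H1 - E7 - E8

/-- The anticanonical class `δ = -K_X = 2H₀+2H₁-E₁-⋯-E₈`. -/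
def delta : L := 2 • H0 + 2 • H1 - E1 - E2 - E3 - E4 - E5 - E6 - E7 - E8

/-- `K' = α₀+α₁+2α₂+2α₃+α₄+α₅`, the canonical central element. -/
def Kp : L := al0 + al1 + 2 • al2 + 2 • al3 + al4 + al5

-- β and γ roots
def b0 : L := al3 + al5
def b1 : L := al1 + al2
def b2 : L := al3 + al4
def b3 : L := al0 + al2
def g0 : L := al0 + al1 + al2 + al3
def g1 : L := al2 + al3 + al4 + al5

/-- The sublattice `Q_B ⊆ Q` of elements `∑ aᵢαᵢ` with `a₀+a₁-a₂-a₃+a₄+a₅ = 0`. -/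
def QB : Set L :=
  {x | ∃ a₀ a₁ a₂ a₃ a₄ a₅ : ℤ,
    x = a₀ • al0 + a₁ • al1 + a₂ • al2 + a₃ • al3 + a₄ • al4 + a₅ • al5 ∧
    a₀ + a₁ - a₂ - a₃ + a₄ + a₅ = 0}

/-! Since `w_u` is an involutive isometry of the intersection form when `⟨u,u⟩ = -2`,
conjugating a reflection by it gives `w_u ∘ w_v ∘ w_u = w_{w_u v}`. Applying this three times
reduces both identities to `γ₀ = w₃ w₀ w₂ α₁` and `γ₁ = w₂ w₅ w₃ α₄`. -/

lemma ip_comm (x y : L) : ip x y = ip y x := by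
  simp only [ip]; ring

lemma ip_add_right (x y v : L) : ip v (x + y) = ip v x + ip v y := by
  rw [ip_comm, ip_add_left, ip_comm x, ip_comm y]

lemma ip_smul_right (c : ℤ) (x v : L) : ip v (c • x) = c * ip v x := by
  rw [ip_comm, ip_smul_left, ip_comm]

lemma reflV_apply (v x : L) : reflV v x = x + ip x v • v := rfl

section Reflection

variable {u : L} (hu : ip u u = -2)
include hu

lemma ip_reflV_reflV (x y : L) : ip (reflV u x) (reflV u y) = ip x y := by
  simp only [reflV_apply, ip_add_left, ip_add_right, ip_smul_left, ip_smul_right, hu,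
    ip_comm u y]
  ring

lemma reflV_reflV (x : L) : reflV u (reflV u x) = x := by
  simp only [reflV_apply, ip_add_left, ip_smul_left, hu]
  rw [show ip x u + ip x u * -2 = -ip x u by ring, neg_smul]
  abel

lemma reflV_comp_reflV_comp_reflV (v : L) :
    reflV u ∘ₗ reflV v ∘ₗ reflV u = reflV (reflV u v) := by
  refine LinearMap.ext fun x => ?_
  have hx : ip (reflV u x) v = ip x (reflV u v) := by
    conv_lhs => rw [← reflV_reflV hu v]
    exact ip_reflV_reflV hu x (reflV u v)
  rw [LinearMap.comp_apply, LinearMap.comp_apply, reflV_apply v, map_add, map_smul,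
    reflV_reflV hu, hx]
  rfl

end Reflection

lemma ip_al0_self : ip al0 al0 = -2 := by decide
lemma ip_al2_self : ip al2 al2 = -2 := by decide
lemma ip_al3_self : ip al3 al3 = -2 := by decide
lemma ip_al5_self : ip al5 al5 = -2 := by decide

lemma g0_eq_reflV : g0 = reflV al3 (reflV al0 (reflV al2 al1)) := by decide
lemma g1_eq_reflV : g1 = reflV al2 (reflV al5 (reflV al3 al4)) := by decide

/-- The reflections in `γ₀` and `γ₁` in terms of the fundamental reflections of
`W̃(D₅⁽¹⁾)`. -/
theorem stmt_19 :
    reflV g0 = w3 ∘ₗ w0 ∘ₗ w2 ∘ₗ w1 ∘ₗ w2 ∘ₗ w0 ∘ₗ w3 ∧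
    reflV g1 = w2 ∘ₗ w5 ∘ₗ w3 ∘ₗ w4 ∘ₗ w3 ∘ₗ w5 ∘ₗ w2 := by
  constructor
  · rw [g0_eq_reflV, ← reflV_comp_reflV_comp_reflV ip_al3_self,
      ← reflV_comp_reflV_comp_reflV ip_al0_self, ← reflV_comp_reflV_comp_reflV ip_al2_self]
    rfl
  · rw [g1_eq_reflV, ← reflV_comp_reflV_comp_reflV ip_al2_self,
      ← reflV_comp_reflV_comp_reflV ip_al5_self, ← reflV_comp_reflV_comp_reflV ip_al3_self]
    rfl
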